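/- A matrix M ∈ M_d(ℝ) is an extreme point of the closed unit ball of the operator space L(ℓ∞^d) if and only if every row of M has exactly one nonzero entry and that entry has absolute value 1. Consequently the number of such extreme points is 2^d · d^d. -/
import Mathlib


noncomputable section

/-- A `d × d` matrix regarded as a bounded operator on `ℓ∞^d` (that is, `Fin d → ℝ`
with the supremum norm). -/
def linfOp (d : ℕ) (M : Matrix (Fin d) (Fin d) ℝ) : (Fin d → ℝ) →L[ℝ] (Fin d → ℝ) :=
  LinearMap.toContinuousLinearMap M.mulVecLin

attribute [local instance] Matrix.linftyOpNormedAddCommGroup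

lemma linfOp_norm_le_iff (d : ℕ) (M : Matrix (Fin d) (Fin d) ℝ) :
    ‖linfOp d M‖ ≤ 1 ↔ ∀ i, ∑ j, |M i j| ≤ 1 := by
  have h : linfOp d M = ContinuousLinearMap.mk (Matrix.mulVecLin M) := rfl
  rw [h, ← Matrix.linfty_opNorm_eq_opNorm, Matrix.linfty_opNorm_def]
  rw [show ((1:ℝ) = ((1 : NNReal) : ℝ)) from rfl, NNReal.coe_le_coe, Finset.sup_le_iff]
  constructor
  · intro hle i
    have := hle i (Finset.mem_univ i)
    have h2 : ((∑ j, ‖M i j‖₊ : NNReal) : ℝ) ≤ 1 := by exact_mod_cast this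
    simpa [Real.norm_eq_abs] using h2
  · intro hle i _
    have h2 : ((∑ j, ‖M i j‖₊ : NNReal) : ℝ) ≤ 1 := by
      simpa [Real.norm_eq_abs] using hle i
    exact_mod_cast h2

lemma mem_extremePoints_l1Ball {d : ℕ} (j0 : Fin d) (r : Fin d → ℝ) :
    r ∈ Set.extremePoints ℝ {x : Fin d → ℝ | ∑ j, |x j| ≤ 1} ↔
      ∃ j, |r j| = 1 ∧ ∀ k, k ≠ j → r k = 0 := by
  rw [mem_extremePoints]
  constructor
  · rintro ⟨hr, hext⟩
    simp only [Set.mem_setOf_eq] at hr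
    -- Step 1: the sum of absolute values is 1
    have hs1 : ∑ j, |r j| = 1 := by
      rcases lt_or_eq_of_le hr with hlt | heq
      · exfalso
        by_cases h0 : r = 0
        · have hmem : (Pi.single j0 1 : Fin d → ℝ) ∈ {x : Fin d → ℝ | ∑ j, |x j| ≤ 1} := by
            simp [Set.mem_setOf_eq, Pi.single_apply, apply_ite abs, Finset.sum_ite_eq']
          have hmem' : (-(Pi.single j0 1) : Fin d → ℝ) ∈ {x : Fin d → ℝ | ∑ j, |x j| ≤ 1} := by
            simp [Set.mem_setOf_eq, Pi.single_apply, apply_ite abs, Finset.sum_ite_eq']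
          obtain ⟨h1, -⟩ := hext _ hmem _ hmem'
            ⟨1/2, 1/2, by norm_num, by norm_num, by norm_num, by rw [h0]; module⟩
          have := congrFun h1 j0
          rw [h0] at this
          simp [Pi.single_apply] at this
        · obtain ⟨m, hm⟩ : ∃ m, r m ≠ 0 := by
            by_contra h; push_neg at h; exact h0 (funext h)
          have hspos : 0 < ∑ j, |r j| :=
            lt_of_lt_of_le (abs_pos.2 hm)
              (Finset.single_le_sum (f := fun j => |r j|) (fun j _ => abs_nonneg _)
                (Finset.mem_univ m))
          set s := ∑ j, |r j| with hs
          set ε := (1 - s)/s with hε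
          have hεpos : 0 < ε := div_pos (by linarith) hspos
          have hεs : ε * s = 1 - s := div_mul_cancel₀ _ (ne_of_gt hspos)
          have hsum1 : ((1+ε) • r : Fin d → ℝ) ∈ {x : Fin d → ℝ | ∑ j, |x j| ≤ 1} := by
            simp only [Set.mem_setOf_eq, Pi.smul_apply, smul_eq_mul, abs_mul, ← Finset.mul_sum]
            rw [abs_of_pos (by linarith : (0:ℝ) < 1 + ε), ← hs]
            nlinarith
          have hsum2 : ((1-ε) • r : Fin d → ℝ) ∈ {x : Fin d → ℝ | ∑ j, |x j| ≤ 1} := by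
            simp only [Set.mem_setOf_eq, Pi.smul_apply, smul_eq_mul, abs_mul, ← Finset.mul_sum]
            rw [← hs]
            have habs : |1 - ε| ≤ 1 + ε := by
              rw [abs_le]; constructor <;> linarith
            nlinarith [abs_nonneg (1 - ε)]
          obtain ⟨h1, -⟩ := hext _ hsum1 _ hsum2
            ⟨1/2, 1/2, by norm_num, by norm_num, by norm_num, by module⟩
          have := congrFun h1 m
          simp only [Pi.smul_apply, smul_eq_mul] at this
          have h2 : ε * r m = 0 := by nlinarith
          rcases mul_eq_zero.1 h2 with h | h
          · exact hεpos.ne' h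
          · exact hm h
      · exact heq
    -- Step 2: at most one nonzero coordinate
    have huniq : ∀ j k, r j ≠ 0 → r k ≠ 0 → j = k := by
      intro j k hj hk
      by_contra hjk
      have hjpos : 0 < |r j| := abs_pos.2 hj
      have hkpos : 0 < |r k| := abs_pos.2 hk
      set c := (|r j| + |r k|)⁻¹ with hc
      have hcpos : 0 < c := inv_pos.2 (by linarith)
      set t := |r k| * c with ht
      set t' := |r j| * c with ht'
      have htpos : 0 < t := mul_pos hkpos hcpos
      have ht'pos : 0 < t' := mul_pos hjpos hcpos
      have htt' : t * |r j| = t' * |r k| := by rw [ht, ht']; ring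
      have ht1 : t ≤ 1 := by
        rw [ht, hc, ← div_eq_mul_inv, div_le_one (by linarith)]; linarith
      have ht'1 : t' ≤ 1 := by
        rw [ht', hc, ← div_eq_mul_inv, div_le_one (by linarith)]; linarith
      set v : Fin d → ℝ := fun l => if l = j then t * r j else if l = k then -(t' * r k) else 0
        with hv
      have hsplit : ∀ (A B : ℝ) (l : Fin d), (if l = j then A else if l = k then B else 0)
          = (if l = j then A else 0) + (if l = k then B else 0) := by
        intro A B l
        rcases eq_or_ne l j with rfl | hlj
        · rw [if_pos rfl, if_pos rfl, if_neg hjk, add_zero]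
        · rw [if_neg hlj, if_neg hlj, zero_add]
      have hsumv : ∀ A B : ℝ, (∑ l, (|r l| + (if l = j then A else if l = k then B else 0)))
          = 1 + A + B := by
        intro A B
        rw [Finset.sum_add_distrib, hs1]
        simp_rw [hsplit A B]
        rw [Finset.sum_add_distrib, Finset.sum_ite_eq', Finset.sum_ite_eq']
        simp [add_assoc]
      have hkj : k ≠ j := fun h => hjk h.symm
      have hvj : v j = t * r j := by rw [hv]; simp
      have hvk : v k = -(t' * r k) := by rw [hv]; simp [hkj]
      have hvl : ∀ l, l ≠ j → l ≠ k → v l = 0 := by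
        intro l h1 h2; rw [hv]; simp [h1, h2]
      have habs1 : ∀ l, |r l + v l|
          = |r l| + (if l = j then t * |r j| else if l = k then -(t' * |r k|) else 0) := by
        intro l
        rcases eq_or_ne l j with rfl | hlj
        · rw [hvj, if_pos rfl, show r l + t * r l = (1 + t) * r l from by ring, abs_mul,
            abs_of_pos (by linarith : (0:ℝ) < 1 + t)]
          ring
        · rcases eq_or_ne l k with rfl | hlk
          · rw [hvk, if_neg hlj, if_pos rfl,
              show r l + -(t' * r l) = (1 - t') * r l from by ring, abs_mul,
              abs_of_nonneg (by linarith : (0:ℝ) ≤ 1 - t')]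
            ring
          · rw [hvl l hlj hlk, if_neg hlj, if_neg hlk, add_zero, add_zero]
      have habs2 : ∀ l, |r l - v l|
          = |r l| + (if l = j then -(t * |r j|) else if l = k then t' * |r k| else 0) := by
        intro l
        rcases eq_or_ne l j with rfl | hlj
        · rw [hvj, if_pos rfl, show r l - t * r l = (1 - t) * r l from by ring, abs_mul,
            abs_of_nonneg (by linarith : (0:ℝ) ≤ 1 - t)]
          ring
        · rcases eq_or_ne l k with rfl | hlk
          · rw [hvk, if_neg hlj, if_pos rfl,
              show r l - -(t' * r l) = (1 + t') * r l from by ring, abs_mul,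
              abs_of_pos (by linarith : (0:ℝ) < 1 + t')]
            ring
          · rw [hvl l hlj hlk, if_neg hlj, if_neg hlk, sub_zero, add_zero]
      have hx1 : (r + v) ∈ {x : Fin d → ℝ | ∑ j, |x j| ≤ 1} := by
        simp only [Set.mem_setOf_eq, Pi.add_apply]
        calc ∑ l, |r l + v l| = 1 + t * |r j| + -(t' * |r k|) := by
              simp_rw [habs1]; exact hsumv _ _
          _ ≤ 1 := by linarith
      have hx2 : (r - v) ∈ {x : Fin d → ℝ | ∑ j, |x j| ≤ 1} := by
        simp only [Set.mem_setOf_eq, Pi.sub_apply]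
        calc ∑ l, |r l - v l| = 1 + -(t * |r j|) + t' * |r k| := by
              simp_rw [habs2]; exact hsumv _ _
          _ ≤ 1 := by linarith
      obtain ⟨h1, -⟩ := hext _ hx1 _ hx2
        ⟨1/2, 1/2, by norm_num, by norm_num, by norm_num, by module⟩
      have := congrFun h1 j
      rw [Pi.add_apply, hvj] at this
      have h2 : t * r j = 0 := by linarith
      rcases mul_eq_zero.1 h2 with h | h
      · exact htpos.ne' h
      · exact hj h
    -- Conclusion
    obtain ⟨m, hm⟩ : ∃ m, r m ≠ 0 := by
      by_contra h; push_neg at h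
      rw [Finset.sum_eq_zero (fun l _ => by rw [h l, abs_zero])] at hs1
      norm_num at hs1
    have hz : ∀ l, l ≠ m → |r l| = 0 := by
      intro l hl
      by_contra h
      exact hl (huniq l m (fun h0 => h (by rw [h0, abs_zero])) hm)
    refine ⟨m, ?_, fun k hk => ?_⟩
    · rw [← hs1]
      exact (Finset.sum_eq_single m (fun l _ hl => hz l hl)
        (fun h => absurd (Finset.mem_univ m) h)).symm
    · by_contra h
      exact hk (huniq k m h hm)
  · rintro ⟨j, hj1, hj2⟩
    have hsum : ∑ l, |r l| = 1 := by
      rw [Finset.sum_eq_single j (fun l _ hl => by rw [hj2 l hl, abs_zero])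
        (fun h => absurd (Finset.mem_univ j) h), hj1]
    have hzero : ∀ (x : Fin d → ℝ), (∑ l, |x l| ≤ 1) → |x j| = 1 → ∀ k, k ≠ j → x k = 0 := by
      intro x hx hxj k hk
      have h6 : ∑ l ∈ Finset.univ.erase j, |x l| = 0 := by
        have h5 := Finset.add_sum_erase Finset.univ (fun l => |x l|) (Finset.mem_univ j)
        have h7 : 0 ≤ ∑ l ∈ Finset.univ.erase j, |x l| :=
          Finset.sum_nonneg fun l _ => abs_nonneg _
        linarith
      have := (Finset.sum_eq_zero_iff_of_nonneg (fun l _ => abs_nonneg (x l))).1 h6 k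
        (Finset.mem_erase.2 ⟨hk, Finset.mem_univ k⟩)
      exact abs_eq_zero.1 this
    refine ⟨by rw [Set.mem_setOf_eq, hsum], ?_⟩
    rintro x₁ hx₁ x₂ hx₂ ⟨a, b, ha, hb, hab, hseg⟩
    simp only [Set.mem_setOf_eq] at hx₁ hx₂
    have hx1j : |x₁ j| ≤ 1 :=
      le_trans (Finset.single_le_sum (f := fun l => |x₁ l|) (fun l _ => abs_nonneg _)
        (Finset.mem_univ j)) hx₁
    have hx2j : |x₂ j| ≤ 1 :=
      le_trans (Finset.single_le_sum (f := fun l => |x₂ l|) (fun l _ => abs_nonneg _)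
        (Finset.mem_univ j)) hx₂
    have hrj : r j = a * x₁ j + b * x₂ j := by
      have := congrFun hseg j
      simpa [Pi.add_apply, Pi.smul_apply, smul_eq_mul] using this.symm
    have h1 : 1 ≤ a * |x₁ j| + b * |x₂ j| := by
      calc (1:ℝ) = |r j| := hj1.symm
        _ = |a * x₁ j + b * x₂ j| := by rw [hrj]
        _ ≤ |a * x₁ j| + |b * x₂ j| := abs_add_le _ _
        _ = a * |x₁ j| + b * |x₂ j| := by
            rw [abs_mul, abs_mul, abs_of_pos ha, abs_of_pos hb]
    have ha2 : a * |x₁ j| ≤ a := mul_le_of_le_one_right ha.le hx1j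
    have hb2 : b * |x₂ j| ≤ b := mul_le_of_le_one_right hb.le hx2j
    have hax : |x₁ j| = 1 := by
      have : a * |x₁ j| = a * 1 := by rw [mul_one]; linarith
      exact mul_left_cancel₀ ha.ne' this
    have hbx : |x₂ j| = 1 := by
      have : b * |x₂ j| = b * 1 := by rw [mul_one]; linarith
      exact mul_left_cancel₀ hb.ne' this
    have habs_r := (abs_eq (zero_le_one)).1 hj1
    have hx1v := (abs_eq (zero_le_one)).1 hax
    have hx2v := (abs_eq (zero_le_one)).1 hbx
    obtain ⟨key1, key2⟩ : x₁ j = r j ∧ x₂ j = r j := by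
      rcases hx1v with h1'|h1' <;> rcases hx2v with h2'|h2' <;> rcases habs_r with h3'|h3' <;>
        rw [h1', h2'] at hrj <;> exact ⟨by linarith, by linarith⟩
    constructor
    · funext l
      rcases eq_or_ne l j with rfl | hl
      · exact key1
      · rw [hzero x₁ hx₁ hax l hl, hj2 l hl]
    · funext l
      rcases eq_or_ne l j with rfl | hl
      · exact key2
      · rw [hzero x₂ hx₂ hbx l hl, hj2 l hl]

/-- a matrix `M` is an extreme point of the closed unit ball of
`L(ℓ∞^d)` if and only if every row of `M` has exactly one nonzero entry, of absolute
value `1`; consequently there are exactly `2^d · d^d` extreme points. -/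
theorem extremePoints_unit_ball_Linf (d : ℕ) :
    (∀ M : Matrix (Fin d) (Fin d) ℝ,
      M ∈ Set.extremePoints ℝ {N : Matrix (Fin d) (Fin d) ℝ | ‖linfOp d N‖ ≤ 1} ↔
        ∀ i : Fin d, ∃ j : Fin d, |M i j| = 1 ∧ ∀ k : Fin d, k ≠ j → M i k = 0) ∧
    (Set.extremePoints ℝ {N : Matrix (Fin d) (Fin d) ℝ | ‖linfOp d N‖ ≤ 1}).ncard =
      2 ^ d * d ^ d := by
  classical
  have hset : {N : Matrix (Fin d) (Fin d) ℝ | ‖linfOp d N‖ ≤ 1}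
      = (Set.univ.pi (fun _ : Fin d => {x : Fin d → ℝ | ∑ j, |x j| ≤ 1})
          : Set (Matrix (Fin d) (Fin d) ℝ)) := by
    ext N
    exact (linfOp_norm_le_iff d N).trans Set.mem_univ_pi.symm
  have hextEq : Set.extremePoints ℝ {N : Matrix (Fin d) (Fin d) ℝ | ‖linfOp d N‖ ≤ 1}
      = (Set.univ.pi (fun _ : Fin d =>
          Set.extremePoints ℝ {x : Fin d → ℝ | ∑ j, |x j| ≤ 1})
          : Set (Matrix (Fin d) (Fin d) ℝ)) := by
    rw [hset]
    exact extremePoints_pi _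
  have hiff : ∀ M : Matrix (Fin d) (Fin d) ℝ,
      M ∈ Set.extremePoints ℝ {N : Matrix (Fin d) (Fin d) ℝ | ‖linfOp d N‖ ≤ 1} ↔
        ∀ i : Fin d, ∃ j : Fin d, |M i j| = 1 ∧ ∀ k : Fin d, k ≠ j → M i k = 0 := by
    intro M
    rw [hextEq]
    exact Set.mem_univ_pi.trans (forall_congr' fun i => mem_extremePoints_l1Ball i (M i))
  refine ⟨hiff, ?_⟩
  set f : (Fin d → Fin d × Bool) → Matrix (Fin d) (Fin d) ℝ :=
    fun c => Matrix.of fun i j => if j = (c i).1 then (if (c i).2 then 1 else -1) else 0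
    with hf
  have hrange : Set.extremePoints ℝ {N : Matrix (Fin d) (Fin d) ℝ | ‖linfOp d N‖ ≤ 1}
      = Set.range f := by
    ext M
    rw [hiff]
    constructor
    · intro h
      choose j hj1 hj2 using h
      refine ⟨fun i => (j i, decide (M i (j i) = 1)), ?_⟩
      apply Matrix.ext
      intro i k
      simp only [hf, Matrix.of_apply]
      rcases eq_or_ne k (j i) with rfl | hk
      · rw [if_pos rfl]
        rcases (abs_eq zero_le_one).1 (hj1 i) with h1 | h1 <;> norm_num [h1]
      · rw [if_neg hk, hj2 i k hk]
    · rintro ⟨c, rfl⟩ i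
      refine ⟨(c i).1, ?_, fun k hk => ?_⟩
      · simp only [hf, Matrix.of_apply, if_pos rfl]
        cases hb : (c i).2 <;> simp [hb]
      · simp [hf, hk]
  have hinj : Function.Injective f := by
    intro c c' hcc
    funext i
    have hentry : ∀ k, f c i k = f c' i k := fun k => by rw [hcc]
    have h1 : (c i).1 = (c' i).1 := by
      by_contra hne
      have := hentry (c i).1
      simp only [hf, Matrix.of_apply, if_pos rfl, if_neg hne] at this
      cases hb : (c i).2 <;> rw [hb] at this <;> norm_num at this
    have h2 : (c i).2 = (c' i).2 := by
      have := hentry (c i).1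
      simp only [hf, Matrix.of_apply, if_pos rfl, h1, if_pos rfl] at this
      cases hb : (c i).2 <;> cases hb' : (c' i).2 <;>
        rw [hb, hb'] at this <;> first | rfl | norm_num at this
    exact Prod.ext h1 h2
  rw [hrange, ← Set.image_univ, Set.ncard_image_of_injective _ hinj, Set.ncard_univ,
    Nat.card_eq_fintype_card]
  rw [show Fintype.card (Fin d → Fin d × Bool) = (d * 2) ^ d by simp [Fintype.card_fun]]
  rw [mul_pow, Nat.mul_comm]
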